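/- There exists a unique m* ∈ (0,1) such that E(m*)/K(m*) = 1/2 (equivalently, 2·E(m*) = K(m*)), and this m* satisfies 0.826 < m* < 0.827. (This is the critical pointedness at which the zero-average cnoidal curve V = 2E(m)/K(m) − (4−2m)/3 crosses the bifurcation line V = (2m−1)/3 into the forbidden wedge.) -/

import Mathlib

open Real

/-- Complete elliptic integral of the first kind `K(m) = ∫₀^{π/2} dθ/√(1 - m sin²θ)`. -/
noncomputable def ellK (m : ℝ) : ℝ :=
  ∫ θ in (0:ℝ)..(π / 2), 1 / Real.sqrt (1 - m * Real.sin θ ^ 2)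

/-- Complete elliptic integral of the second kind `E(m) = ∫₀^{π/2} √(1 - m sin²θ) dθ`. -/
noncomputable def ellE (m : ℝ) : ℝ :=
  ∫ θ in (0:ℝ)..(π / 2), Real.sqrt (1 - m * Real.sin θ ^ 2)

/-!
Write `2E(m) - K(m) = ∫₀^{π/2} g(m sin²θ) dθ` with `g(y) = 2√(1-y) - 1/√(1-y) = (1-2y)/√(1-y)`.
Since `g` is strictly decreasing, so is `2E - K`, and `E/K = 1/2` means exactly that `2E - K`
vanishes. The binomial series of `(1-y)^{-1/2}` gives `g(y) = 1 - ∑ₙ cₙ y^{n+1}` with positive,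
decreasing `cₙ`, and `∫₀^{π/2} sin^{2k} θ dθ = (π/2) C(2k,k)/4^k`. Truncating the series therefore
bounds `2E - K` from above by a rational multiple of `π`, and, after estimating the tail by a
geometric series, from below. These bounds show that `2E - K` is positive at `0.826` and negative
at `0.827`, and the intermediate value theorem locates the root.
-/

open Finset Set intervalIntegral

noncomputable def wallisCoeff (n : ℕ) : ℝ := ∏ i ∈ range n, (2 * i + 1) / (2 * i + 2)

lemma wallisCoeff_succ (n : ℕ) :
    wallisCoeff (n + 1) = wallisCoeff n * ((2 * n + 1) / (2 * n + 2)) :=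
  prod_range_succ _ _

lemma wallisCoeff_pos (n : ℕ) : 0 < wallisCoeff n :=
  prod_pos fun _ _ => by positivity

lemma factorial_mul_wallisCoeff (n : ℕ) :
    n.factorial * wallisCoeff n = (ascPochhammer ℝ n).eval (1 / 2) := by
  induction n with
  | zero => simp [wallisCoeff]
  | succ n ih =>
    rw [ascPochhammer_succ_eval, ← ih, wallisCoeff_succ, Nat.factorial_succ]
    push_cast
    field_simp
    ring

lemma ring_choose_eq_wallisCoeff (n : ℕ) :
    Ring.choose (1 / 2 + n - 1 : ℝ) n = wallisCoeff n := by
  have h := Ring.factorial_nsmul_multichoose_eq_ascPochhammer (1 / 2 : ℝ) n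
  rw [Polynomial.ascPochhammer_smeval_eq_eval, ← factorial_mul_wallisCoeff, nsmul_eq_mul] at h
  rw [← Ring.multichoose_eq]
  exact mul_left_cancel₀ (by positivity) h

lemma hasSum_wallisCoeff_mul_pow {y : ℝ} (hy : |y| < 1) :
    HasSum (fun n => wallisCoeff n * y ^ n) (1 / √(1 - y)) := by
  have h := (one_div_one_sub_rpow_hasFPowerSeriesOnBall_zero (1 / 2)).hasSum
    (y := y) (by simpa [enorm_eq_nnnorm, ← NNReal.coe_lt_coe] using hy)
  simp only [FormalMultilinearSeries.ofScalars_apply_eq, zero_add, ring_choose_eq_wallisCoeff,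
    smul_eq_mul] at h
  rwa [sqrt_eq_rpow]

lemma integral_sin_sq_pow (n : ℕ) :
    ∫ θ in (0 : ℝ)..(π / 2), (sin θ ^ 2) ^ n = π / 2 * wallisCoeff n := by
  induction n with
  | zero => simp [wallisCoeff]
  | succ n ih =>
    simp only [← pow_mul] at ih ⊢
    rw [mul_add_one, integral_sin_pow, ih, wallisCoeff_succ]
    simp only [sin_zero, cos_pi_div_two]
    push_cast
    ring

noncomputable def twoESubKCoeff (n : ℕ) : ℝ := 2 * wallisCoeff n - wallisCoeff (n + 1)

lemma twoESubKCoeff_eq (n : ℕ) :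
    twoESubKCoeff n = wallisCoeff n * ((2 * n + 3) / (2 * n + 2)) := by
  rw [twoESubKCoeff, wallisCoeff_succ]
  field_simp
  ring

lemma twoESubKCoeff_nonneg (n : ℕ) : 0 ≤ twoESubKCoeff n := by
  rw [twoESubKCoeff_eq]
  have := wallisCoeff_pos n
  positivity

lemma twoESubKCoeff_antitone : Antitone twoESubKCoeff := by
  refine antitone_nat_of_succ_le fun n => ?_
  rw [twoESubKCoeff_eq, twoESubKCoeff_eq, wallisCoeff_succ, mul_assoc]
  refine mul_le_mul_of_nonneg_left ?_ (wallisCoeff_pos n).le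
  push_cast
  rw [div_mul_div_comm, div_le_div_iff₀ (by positivity) (by positivity)]
  nlinarith

lemma hasSum_twoESubKCoeff {y : ℝ} (hy : |y| < 1) :
    HasSum (fun n => twoESubKCoeff n * y ^ (n + 1)) (1 - (2 * √(1 - y) - 1 / √(1 - y))) := by
  have hS := hasSum_wallisCoeff_mul_pow hy
  have hshift := (hasSum_nat_add_iff' 1).2 hS
  have h1y : 0 < 1 - y := by linarith [le_abs_self y]
  have hpos : 0 < √(1 - y) := sqrt_pos.2 h1y
  have hterm : (fun n => twoESubKCoeff n * y ^ (n + 1)) =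
      fun n => 2 * y * (wallisCoeff n * y ^ n) - wallisCoeff (n + 1) * y ^ (n + 1) := by
    funext n
    rw [twoESubKCoeff]
    ring
  have hvalue : 1 - (2 * √(1 - y) - 1 / √(1 - y)) =
      2 * y * (1 / √(1 - y)) - (1 / √(1 - y) - ∑ i ∈ range 1, wallisCoeff i * y ^ i) := by
    simp only [sum_range_one, wallisCoeff, Finset.prod_range_zero, pow_zero]
    field_simp
    rw [sq_sqrt h1y.le]
    ring
  rw [hterm, hvalue]
  exact (hS.mul_left (2 * y)).sub hshift

section Bounds

variable {y m : ℝ} (N : ℕ)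

lemma two_sqrt_sub_one_div_sqrt_le (hy0 : 0 ≤ y) (hy1 : y < 1) :
    2 * √(1 - y) - 1 / √(1 - y) ≤ 1 - ∑ n ∈ range N, twoESubKCoeff n * y ^ (n + 1) := by
  have h := sum_le_hasSum (range N) (fun n _ => by have := twoESubKCoeff_nonneg n; positivity)
    (hasSum_twoESubKCoeff (abs_lt.2 ⟨by linarith, hy1⟩))
  linarith

/-- The tail of the series is dominated by a geometric series since the coefficients decrease. -/
lemma le_two_sqrt_sub_one_div_sqrt (hy0 : 0 ≤ y) (hym : y ≤ m) (hm : m < 1) :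
    1 - ∑ n ∈ range N, twoESubKCoeff n * y ^ (n + 1) - twoESubKCoeff N * y ^ (N + 1) / (1 - m) ≤
      2 * √(1 - y) - 1 / √(1 - y) := by
  have htail := (hasSum_nat_add_iff' N).2
    (hasSum_twoESubKCoeff (abs_lt.2 ⟨by linarith, hym.trans_lt hm⟩))
  have hgeom := (hasSum_geometric_of_lt_one hy0 (hym.trans_lt hm)).mul_left
    (twoESubKCoeff N * y ^ (N + 1))
  have hle := hasSum_le (fun k => ?_) htail hgeom
  · have : twoESubKCoeff N * y ^ (N + 1) * (1 - y)⁻¹ ≤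
        twoESubKCoeff N * y ^ (N + 1) / (1 - m) := by
      rw [← div_eq_mul_inv]
      have := twoESubKCoeff_nonneg N
      gcongr
    linarith
  · rw [show k + N + 1 = N + 1 + k by ring, pow_add, ← mul_assoc]
    have := twoESubKCoeff_antitone (Nat.le_add_left N k)
    have := twoESubKCoeff_nonneg N
    gcongr

end Bounds

lemma strictAntiOn_two_sqrt_sub_one_div_sqrt :
    StrictAntiOn (fun y : ℝ => 2 * √(1 - y) - 1 / √(1 - y)) (Iio 1) := by
  intro y₁ _ y₂ hy₂ hy
  have hpos : 0 < √(1 - y₂) := sqrt_pos.2 (by linarith [mem_Iio.1 hy₂])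
  have hlt : √(1 - y₂) < √(1 - y₁) := sqrt_lt_sqrt (by linarith [mem_Iio.1 hy₂]) (by linarith)
  have := one_div_lt_one_div_of_lt hpos hlt
  dsimp only
  linarith

lemma one_sub_mul_sin_sq_pos {m : ℝ} (hm : m < 1) (θ : ℝ) : 0 < 1 - m * sin θ ^ 2 := by
  rcases le_or_gt m 0 with h | h
  · nlinarith [sq_nonneg (sin θ)]
  · nlinarith [sin_sq_le_one θ]

lemma mul_sin_sq_le {m : ℝ} (hm : 0 ≤ m) (θ : ℝ) : m * sin θ ^ 2 ≤ m :=
  mul_le_of_le_one_right hm (sin_sq_le_one θ)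

lemma continuous_one_div_sqrt_one_sub_mul_sin_sq {m : ℝ} (hm : m < 1) :
    Continuous fun θ => 1 / √(1 - m * sin θ ^ 2) :=
  continuous_const.div (by fun_prop) fun θ => (sqrt_pos.2 (one_sub_mul_sin_sq_pos hm θ)).ne'

lemma ellK_pos {m : ℝ} (hm : m < 1) : 0 < ellK m :=
  intervalIntegral_pos_of_pos_on
    ((continuous_one_div_sqrt_one_sub_mul_sin_sq hm).intervalIntegrable _ _)
    (fun θ _ => one_div_pos.2 (sqrt_pos.2 (one_sub_mul_sin_sq_pos hm θ))) (by positivity)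

lemma ellE_div_ellK_eq_half_iff {m : ℝ} (hm : m < 1) :
    ellE m / ellK m = 1 / 2 ↔ 2 * ellE m - ellK m = 0 := by
  rw [div_eq_iff (ellK_pos hm).ne']
  constructor <;> intro h <;> linarith

lemma two_mul_ellE_sub_ellK_eq_integral {m : ℝ} (hm : m < 1) :
    2 * ellE m - ellK m =
      ∫ θ in (0 : ℝ)..(π / 2), (2 * √(1 - m * sin θ ^ 2) - 1 / √(1 - m * sin θ ^ 2)) := by
  rw [integral_sub ((Continuous.intervalIntegrable (by fun_prop) _ _))
    ((continuous_one_div_sqrt_one_sub_mul_sin_sq hm).intervalIntegrable _ _),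
    integral_const_mul, ellE, ellK]

lemma continuous_two_sqrt_sub_one_div_sqrt_one_sub_mul_sin_sq {m : ℝ} (hm : m < 1) :
    Continuous fun θ => 2 * √(1 - m * sin θ ^ 2) - 1 / √(1 - m * sin θ ^ 2) :=
  (continuous_const.mul (by fun_prop)).sub (continuous_one_div_sqrt_one_sub_mul_sin_sq hm)

lemma continuousOn_ellK : ContinuousOn ellK (Iio 1) := by
  rw [continuousOn_iff_continuous_domRestrict]
  refine continuous_parametric_intervalIntegral_of_continuous' (μ := MeasureTheory.volume)
    (f := fun (m : Iio (1 : ℝ)) θ => 1 / √(1 - m * sin θ ^ 2)) ?_ 0 (π / 2)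
  exact continuous_const.div (by fun_prop)
    fun p => (sqrt_pos.2 (one_sub_mul_sin_sq_pos p.1.2 p.2)).ne'

lemma continuous_ellE : Continuous ellE :=
  continuous_parametric_intervalIntegral_of_continuous' (by fun_prop) _ _

lemma continuousOn_two_mul_ellE_sub_ellK :
    ContinuousOn (fun m => 2 * ellE m - ellK m) (Iio 1) :=
  (continuous_const.mul continuous_ellE).continuousOn.sub continuousOn_ellK

lemma strictAntiOn_two_mul_ellE_sub_ellK :
    StrictAntiOn (fun m => 2 * ellE m - ellK m) (Iio 1) := by
  intro m₁ hm₁ m₂ hm₂ hm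
  have hy (m : ℝ) (hm : m < 1) (θ : ℝ) : m * sin θ ^ 2 ∈ Set.Iio 1 := by
    have := one_sub_mul_sin_sq_pos hm θ
    rw [Set.mem_Iio]
    linarith
  dsimp only
  rw [two_mul_ellE_sub_ellK_eq_integral hm₁, two_mul_ellE_sub_ellK_eq_integral hm₂]
  refine integral_lt_integral_of_continuousOn_of_le_of_exists_lt (by positivity)
    (continuous_two_sqrt_sub_one_div_sqrt_one_sub_mul_sin_sq hm₂).continuousOn
    (continuous_two_sqrt_sub_one_div_sqrt_one_sub_mul_sin_sq hm₁).continuousOn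
    (fun θ _ => strictAntiOn_two_sqrt_sub_one_div_sqrt.antitoneOn (hy m₁ hm₁ θ) (hy m₂ hm₂ θ)
      (by gcongr)) ⟨π / 2, right_mem_Icc.2 (by positivity), ?_⟩
  simpa using strictAntiOn_two_sqrt_sub_one_div_sqrt hm₁ hm₂ hm

noncomputable def twoESubKPartialSum (N : ℕ) (m : ℝ) : ℝ :=
  1 - ∑ n ∈ range N, twoESubKCoeff n * wallisCoeff (n + 1) * m ^ (n + 1)

lemma integral_mul_sin_sq_pow (c m : ℝ) (n : ℕ) :
    ∫ θ in (0 : ℝ)..(π / 2), c * (m * sin θ ^ 2) ^ n = π / 2 * (c * wallisCoeff n * m ^ n) := by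
  simp_rw [mul_pow, ← mul_assoc]
  rw [integral_const_mul, integral_sin_sq_pow]
  ring

lemma integral_one_sub_sum (N : ℕ) (m : ℝ) :
    ∫ θ in (0 : ℝ)..(π / 2), (1 - ∑ n ∈ range N, twoESubKCoeff n * (m * sin θ ^ 2) ^ (n + 1)) =
      π / 2 * twoESubKPartialSum N m := by
  rw [integral_sub intervalIntegrable_const
    (Continuous.intervalIntegrable (by fun_prop) _ _), integral_finsetSum
    (fun n _ => Continuous.intervalIntegrable (by fun_prop) _ _)]
  simp only [integral_mul_sin_sq_pow, integral_const, twoESubKPartialSum, ← mul_sum]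
  simp
  ring

theorem two_mul_ellE_sub_ellK_le {m : ℝ} (hm0 : 0 ≤ m) (hm1 : m < 1) (N : ℕ) :
    2 * ellE m - ellK m ≤ π / 2 * twoESubKPartialSum N m := by
  rw [two_mul_ellE_sub_ellK_eq_integral hm1, ← integral_one_sub_sum]
  exact integral_mono_on (by positivity)
    ((continuous_two_sqrt_sub_one_div_sqrt_one_sub_mul_sin_sq hm1).intervalIntegrable _ _)
    (Continuous.intervalIntegrable (by fun_prop) _ _)
    fun θ _ => two_sqrt_sub_one_div_sqrt_le N (by positivity) ((mul_sin_sq_le hm0 θ).trans_lt hm1)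

theorem le_two_mul_ellE_sub_ellK {m : ℝ} (hm0 : 0 ≤ m) (hm1 : m < 1) (N : ℕ) :
    π / 2 * (twoESubKPartialSum N m -
      twoESubKCoeff N * wallisCoeff (N + 1) * m ^ (N + 1) / (1 - m)) ≤ 2 * ellE m - ellK m := by
  have hint : π / 2 * (twoESubKPartialSum N m -
      twoESubKCoeff N * wallisCoeff (N + 1) * m ^ (N + 1) / (1 - m)) =
      ∫ θ in (0 : ℝ)..(π / 2), (1 - ∑ n ∈ range N, twoESubKCoeff n * (m * sin θ ^ 2) ^ (n + 1) -
        twoESubKCoeff N / (1 - m) * (m * sin θ ^ 2) ^ (N + 1)) := by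
    rw [integral_sub (Continuous.intervalIntegrable (by fun_prop) _ _)
      (Continuous.intervalIntegrable (by fun_prop) _ _), integral_one_sub_sum,
      integral_mul_sin_sq_pow]
    ring
  rw [hint, two_mul_ellE_sub_ellK_eq_integral hm1]
  refine integral_mono_on (by positivity) (Continuous.intervalIntegrable (by fun_prop) _ _)
    ((continuous_two_sqrt_sub_one_div_sqrt_one_sub_mul_sin_sq hm1).intervalIntegrable _ _)
    fun θ _ => ?_
  convert le_two_sqrt_sub_one_div_sqrt N (by positivity) (mul_sin_sq_le hm0 θ) hm1 using 2
  ring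

lemma two_mul_ellE_sub_ellK_pos_826 : 0 < 2 * ellE (826 / 1000) - ellK (826 / 1000) := by
  refine lt_of_lt_of_le ?_ (le_two_mul_ellE_sub_ellK (by norm_num) (by norm_num) 22)
  have : 0 < twoESubKPartialSum 22 (826 / 1000) -
      twoESubKCoeff 22 * wallisCoeff 23 * (826 / 1000) ^ 23 / (1 - 826 / 1000) := by
    norm_num [twoESubKPartialSum, twoESubKCoeff, wallisCoeff, sum_range_succ, prod_range_succ]
  positivity

lemma two_mul_ellE_sub_ellK_neg_827 : 2 * ellE (827 / 1000) - ellK (827 / 1000) < 0 := by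
  refine (two_mul_ellE_sub_ellK_le (by norm_num) (by norm_num) 20).trans_lt ?_
  have : twoESubKPartialSum 20 (827 / 1000) < 0 := by
    norm_num [twoESubKPartialSum, twoESubKCoeff, wallisCoeff, sum_range_succ, prod_range_succ]
  nlinarith [pi_pos]

/-- **The critical pointedness `m* ≃ 0.8261`.**  There is a unique `m* ∈ (0,1)` with
`E(m*)/K(m*) = 1/2`, and it satisfies `0.826 < m* < 0.827`.  This is where the
zero-average cnoidal curve `V = 2E/K - (4-2m)/3` enters the forbidden wedge across
the bifurcation line `V = (2m-1)/3`. -/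
theorem critical_pointedness_exists_unique :
    ∃ m : ℝ, (m ∈ Set.Ioo (0:ℝ) 1 ∧ ellE m / ellK m = 1 / 2) ∧
      (∀ m' : ℝ, m' ∈ Set.Ioo (0:ℝ) 1 ∧ ellE m' / ellK m' = 1 / 2 → m' = m) ∧
      0.826 < m ∧ m < 0.827 := by
  have hsub : Set.Icc (826 / 1000 : ℝ) (827 / 1000) ⊆ Set.Iio 1 := fun m hm => by
    rw [Set.mem_Iio]; linarith [hm.2]
  obtain ⟨m, ⟨hm826, hm827⟩, hm⟩ := intermediate_value_Ioo' (by norm_num)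
    (continuousOn_two_mul_ellE_sub_ellK.mono hsub)
    ⟨two_mul_ellE_sub_ellK_neg_827, two_mul_ellE_sub_ellK_pos_826⟩
  have hm1 : m < 1 := by linarith
  refine ⟨m, ⟨⟨by linarith, hm1⟩, (ellE_div_ellK_eq_half_iff hm1).2 hm⟩,
    fun m' ⟨hm', hm'E⟩ => ?_, by norm_num; linarith, by norm_num; linarith⟩
  exact strictAntiOn_two_mul_ellE_sub_ellK.injOn hm'.2 hm1
    (((ellE_div_ellK_eq_half_iff hm'.2).1 hm'E).trans hm.symm)
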